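/- The bonded sum ⊞_B is an associative binary operation on the set of proper numerical sets. -/
import Mathlib


open Set

/-- A numerical set: contains 0 and has finite complement in ℕ. -/
def IsNumericalSet (R : Set ℕ) : Prop := 0 ∈ R ∧ Rᶜ.Finite

/-- A proper numerical set: a numerical set different from ℕ₀. -/
def ProperNumericalSet (R : Set ℕ) : Prop := 0 ∈ R ∧ Rᶜ.Finite ∧ Rᶜ.Nonempty

/-- The set of gaps of a numerical set. -/
def gaps (R : Set ℕ) : Set ℕ := Rᶜ

/-- The genus: the number of gaps. -/
noncomputable def genus (R : Set ℕ) : ℕ := Rᶜ.ncard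

/-- The Frobenius number: the largest gap (for a proper numerical set). -/
noncomputable def frob (R : Set ℕ) : ℕ := sSup Rᶜ

/-- The nsCond: F(R)+1 for a proper numerical set, and 0 for ℕ₀. -/
noncomputable def nsCond (R : Set ℕ) : ℕ := by
  classical exact if Rᶜ = ∅ then 0 else frob R + 1

/-- The dual numerical set: for 0 ≤ x ≤ F(R), x ∈ R* iff F(R)-x ∉ R,
together with all integers > F(R). -/
def dual (R : Set ℕ) : Set ℕ := {x | frob R < x ∨ frob R - x ∉ R}

/-- Symmetry: for every 0 ≤ a ≤ F(R), exactly one of a, F(R)-a belongs to R. -/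
def IsSymmetric (R : Set ℕ) : Prop := ∀ a ≤ frob R, (a ∈ R ↔ frob R - a ∉ R)

/-- Bonded sum: left elements of R, then F(R) = c(R)-1, then S shifted up by c(R)-1. -/
def bsum (R S : Set ℕ) : Set ℕ := (R ∩ Iio (nsCond R)) ∪ ((· + (nsCond R - 1)) '' S)

/-- End-to-end sum: small elements of R, then S shifted up by c(R). -/
def esum (R S : Set ℕ) : Set ℕ := (R ∩ Iio (nsCond R)) ∪ ((· + nsCond R) '' S)

/-- Conjoint sum: left elements of R, then the nonzero part of S shifted up by c(R)-1. -/
def csum (R S : Set ℕ) : Set ℕ := (R ∩ Iio (nsCond R)) ∪ ((· + (nsCond R - 1)) '' (S \ {0}))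

/-- The numerical set R - r obtained by subtracting r from all elements of R that are ≥ r. -/
def shiftDown (R : Set ℕ) (r : ℕ) : Set ℕ := {x | x + r ∈ R}

/-- Hook set of the column corresponding to a left element r of R. -/
def hookSet (R : Set ℕ) (r : ℕ) : Set ℕ := gaps (shiftDown R r)

/-- Pseudo-Frobenius numbers. -/
def PF (R : Set ℕ) : Set ℕ := {z | z ∉ R ∧ ∀ r ∈ R, r ≠ 0 → z + r ∈ R}

/-- The type of a numerical semigroup. -/
noncomputable def typ (R : Set ℕ) : ℕ := (PF R).ncard

/-- A numerical semigroup: a numerical set closed under addition. -/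
def IsNumericalSemigroup (R : Set ℕ) : Prop :=
  IsNumericalSet R ∧ ∀ x ∈ R, ∀ y ∈ R, x + y ∈ R

/-- Almost symmetric numerical semigroup: 2g(R) = F(R) + t(R). -/
def AlmostSymmetric (R : Set ℕ) : Prop := 2 * genus R = frob R + typ R

lemma frob_mem_compl {R : Set ℕ} (hR : ProperNumericalSet R) : frob R ∈ Rᶜ :=
  hR.2.2.csSup_mem hR.2.1

lemma frob_not_mem {R : Set ℕ} (hR : ProperNumericalSet R) : frob R ∉ R :=
  frob_mem_compl hR

lemma le_frob {R : Set ℕ} (hR : ProperNumericalSet R) {x : ℕ} (hx : x ∉ R) :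
    x ≤ frob R := le_csSup hR.2.1.bddAbove hx

lemma frob_pos {R : Set ℕ} (hR : ProperNumericalSet R) : 1 ≤ frob R := by
  rcases Nat.eq_zero_or_pos (frob R) with h | h
  · exact absurd (h ▸ frob_not_mem hR) (not_not.2 hR.1)
  · exact h

lemma nsCond_eq {R : Set ℕ} (hR : ProperNumericalSet R) : nsCond R = frob R + 1 := by
  have : Rᶜ ≠ ∅ := hR.2.2.ne_empty
  simp [nsCond, this]

lemma mem_bsum {R : Set ℕ} (hR : ProperNumericalSet R) (S : Set ℕ) (x : ℕ) :
    x ∈ bsum R S ↔ (x < frob R ∧ x ∈ R) ∨ (frob R ≤ x ∧ x - frob R ∈ S) := by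
  rw [bsum, nsCond_eq hR]
  simp only [Nat.add_sub_cancel, mem_union, mem_inter_iff, mem_Iio, mem_image]
  constructor
  · rintro (⟨h1, h2⟩ | ⟨s, hs, rfl⟩)
    · left
      refine ⟨?_, h1⟩
      rcases lt_or_eq_of_le (Nat.lt_succ_iff.mp h2) with h | h
      · exact h
      · exact absurd (h ▸ h1) (frob_not_mem hR)
    · right
      exact ⟨Nat.le_add_left _ _, by simpa using hs⟩
  · rintro (⟨h1, h2⟩ | ⟨h1, h2⟩)
    · exact Or.inl ⟨h2, by omega⟩
    · exact Or.inr ⟨x - frob R, h2, by omega⟩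

lemma bsum_proper {R S : Set ℕ} (hR : ProperNumericalSet R) (hS : ProperNumericalSet S) :
    ProperNumericalSet (bsum R S) := by
  refine ⟨?_, ?_, ?_⟩
  · rw [mem_bsum hR]
    exact Or.inl ⟨frob_pos hR, hR.1⟩
  · apply Set.Finite.subset (Set.finite_Iio (frob R + frob S + 1))
    intro x hx
    simp only [mem_compl_iff, mem_bsum hR] at hx
    push_neg at hx
    by_contra hlt
    simp only [mem_Iio, not_lt] at hlt
    have h1 : frob R ≤ x := by omega
    have h2 := hx.2 h1
    have := le_frob hS h2
    omega
  · refine ⟨frob R + frob S, ?_⟩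
    simp only [mem_compl_iff, mem_bsum hR]
    push_neg
    constructor
    · intro h; omega
    · intro _; simpa using frob_not_mem hS

lemma frob_bsum {R S : Set ℕ} (hR : ProperNumericalSet R) (hS : ProperNumericalSet S) :
    frob (bsum R S) = frob R + frob S := by
  have hproper := bsum_proper hR hS
  apply le_antisymm
  · apply csSup_le hproper.2.2
    intro x hx
    simp only [mem_compl_iff, mem_bsum hR] at hx
    push_neg at hx
    by_contra hlt
    push_neg at hlt
    have h1 : frob R ≤ x := by omega
    have h2 := hx.2 h1
    have := le_frob hS h2
    omega
  · apply le_csSup hproper.2.1.bddAbove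
    simp only [mem_compl_iff, mem_bsum hR]
    push_neg
    exact ⟨fun h => by omega, fun _ => by simpa using frob_not_mem hS⟩

theorem stmt_10 (R S T : Set ℕ) (hR : ProperNumericalSet R)
    (hS : ProperNumericalSet S) (hT : ProperNumericalSet T) :
    ProperNumericalSet (bsum R S) ∧ bsum (bsum R S) T = bsum R (bsum S T) := by
  have hRS := bsum_proper hR hS
  refine ⟨hRS, ?_⟩
  ext x
  rw [mem_bsum hRS, mem_bsum hR, mem_bsum hR, mem_bsum hS, frob_bsum hR hS,
    Nat.sub_sub]
  constructor
  · rintro (⟨h1, (⟨h2, h3⟩ | ⟨h2, h3⟩)⟩ | ⟨h1, h2⟩)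
    · exact Or.inl ⟨h2, h3⟩
    · exact Or.inr ⟨h2, Or.inl ⟨by omega, h3⟩⟩
    · exact Or.inr ⟨by omega, Or.inr ⟨by omega, h2⟩⟩
  · rintro (⟨h1, h2⟩ | ⟨h1, (⟨h2, h3⟩ | ⟨h2, h3⟩)⟩)
    · exact Or.inl ⟨by omega, Or.inl ⟨h1, h2⟩⟩
    · exact Or.inl ⟨by omega, Or.inr ⟨h1, h3⟩⟩
    · exact Or.inr ⟨by omega, h3⟩
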